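/- Let n ≥ 3. The set of conformal Killing vectors on ℝⁿ is a real vector subspace of the space of smooth vector fields on ℝⁿ, and its dimension equals (n+1)(n+2)/2. -/

import Mathlib

/-- Partial derivative in the `a`-th coordinate direction. -/
noncomputable def pd {n : ℕ} (a : Fin n) (f : (Fin n → ℝ) → ℝ) : (Fin n → ℝ) → ℝ :=
  fun x => fderiv ℝ f x (Pi.single a (1 : ℝ))

/-- The divergence `div V = Σ_a ∂_a V^a`. -/
noncomputable def divg {n : ℕ} (V : (Fin n → ℝ) → (Fin n → ℝ)) : (Fin n → ℝ) → ℝ :=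
  fun x => ∑ a, pd a (fun y => V y a) x

/-- A conformal Killing vector on ℝⁿ. -/
def IsCKV (n : ℕ) (V : (Fin n → ℝ) → (Fin n → ℝ)) : Prop :=
  ContDiff ℝ (⊤ : ℕ∞) V ∧ ∀ (a b : Fin n) (x : Fin n → ℝ),
    pd a (fun y => V y b) x + pd b (fun y => V y a) x
      = 2 / (n : ℝ) * divg V x * (if a = b then (1 : ℝ) else 0)

section basic
variable {n : ℕ} {a b : Fin n} {f g : (Fin n → ℝ) → ℝ} {x : Fin n → ℝ} {c : ℝ}

lemma pd_const : pd a (fun _ => c) = fun _ => 0 := by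
  funext x; simp [pd]

lemma pd_coord (k : Fin n) : pd a (fun y => y k) = fun _ => if k = a then 1 else 0 := by
  funext x
  have h : fderiv ℝ (fun y : Fin n → ℝ => y k) x = ContinuousLinearMap.proj k := by
    exact (ContinuousLinearMap.proj k : (Fin n → ℝ) →L[ℝ] ℝ).fderiv
  simp [pd, h, Pi.single_apply]

lemma diff_coord (k : Fin n) : Differentiable ℝ (fun y : Fin n → ℝ => y k) :=
  (ContinuousLinearMap.proj k : (Fin n → ℝ) →L[ℝ] ℝ).differentiable

lemma pd_add (hf : DifferentiableAt ℝ f x) (hg : DifferentiableAt ℝ g x) :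
    pd a (fun y => f y + g y) x = pd a f x + pd a g x := by
  simp [pd, fderiv_fun_add hf hg]

lemma pd_sub (hf : DifferentiableAt ℝ f x) (hg : DifferentiableAt ℝ g x) :
    pd a (fun y => f y - g y) x = pd a f x - pd a g x := by
  simp [pd, fderiv_fun_sub hf hg]

lemma pd_const_mul (hf : DifferentiableAt ℝ f x) :
    pd a (fun y => c * f y) x = c * pd a f x := by
  simp [pd, fderiv_const_mul hf]

lemma pd_mul (hf : DifferentiableAt ℝ f x) (hg : DifferentiableAt ℝ g x) :
    pd a (fun y => f y * g y) x = pd a f x * g x + f x * pd a g x := by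
  simp [pd, fderiv_fun_mul hf hg]; ring

lemma pd_sum {ι : Type*} (s : Finset ι) (F : ι → (Fin n → ℝ) → ℝ)
    (hF : ∀ i ∈ s, DifferentiableAt ℝ (F i) x) :
    pd a (fun y => ∑ i ∈ s, F i y) x = ∑ i ∈ s, pd a (F i) x := by
  simp only [pd]
  rw [fderiv_fun_sum hF]
  simp

end basic

section smooth
variable {n : ℕ} {a b : Fin n} {f : (Fin n → ℝ) → ℝ} {x : Fin n → ℝ}

lemma pd_contDiff (hf : ContDiff ℝ (⊤ : ℕ∞) f) (a : Fin n) : ContDiff ℝ (⊤ : ℕ∞) (pd a f) := by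
  have h1 : ContDiff ℝ (⊤ : ℕ∞) (fun y => fderiv ℝ f y) := hf.fderiv_right (by simp)
  exact (ContinuousLinearMap.apply ℝ ℝ (Pi.single a (1:ℝ))).contDiff.comp h1

lemma pd_pd (hf : ContDiff ℝ (⊤ : ℕ∞) f) (a b : Fin n) (x : Fin n → ℝ) :
    pd a (pd b f) x = (fderiv ℝ (fderiv ℝ f) x (Pi.single a 1)) (Pi.single b 1) := by
  have hdf : ContDiff ℝ (⊤ : ℕ∞) (fun y => fderiv ℝ f y) := hf.fderiv_right (by simp)
  have h := fderiv_clm_apply (hdf.differentiable (by simp) x)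
      (differentiableAt_const (Pi.single b (1:ℝ)))
  show fderiv ℝ (fun y => (fderiv ℝ f y) (Pi.single b 1)) x (Pi.single a 1) = _
  rw [h]
  simp

lemma pd_comm (hf : ContDiff ℝ (⊤ : ℕ∞) f) (a b : Fin n) (x : Fin n → ℝ) :
    pd a (pd b f) x = pd b (pd a f) x := by
  rw [pd_pd hf, pd_pd hf]
  exact second_derivative_symmetric
    (fun y => ((hf.differentiable (by simp)) y).hasFDerivAt)
    (((hf.fderiv_right (m := (⊤ : ℕ∞)) (by simp)).differentiable (by simp) x).hasFDerivAt) _ _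

end smooth


section fields
variable {n : ℕ} {a b : Fin n} {x : Fin n → ℝ}

lemma pd_coord' (k : Fin n) : pd a (fun y => y k) x = if k = a then 1 else 0 := by
  rw [pd_coord]

lemma contDiff_coord (k : Fin n) : ContDiff ℝ (⊤ : ℕ∞) (fun y : Fin n → ℝ => y k) :=
  (ContinuousLinearMap.proj k : (Fin n → ℝ) →L[ℝ] ℝ).contDiff

lemma contDiff_sq : ContDiff ℝ (⊤ : ℕ∞) (fun y : Fin n → ℝ => ∑ k, y k * y k) :=
  ContDiff.sum fun k _ => (contDiff_coord k).mul (contDiff_coord k)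

lemma diff_sq : Differentiable ℝ (fun y : Fin n → ℝ => ∑ k, y k * y k) :=
  contDiff_sq.differentiable (by simp)

def transF (c : Fin n) : (Fin n → ℝ) → Fin n → ℝ := fun _ b => if b = c then 1 else 0
def dilF : (Fin n → ℝ) → Fin n → ℝ := fun x => x
def rotF (i j : Fin n) : (Fin n → ℝ) → Fin n → ℝ :=
  fun x b => (if b = i then 1 else 0) * x j - (if b = j then 1 else 0) * x i
def scF (c : Fin n) : (Fin n → ℝ) → Fin n → ℝ :=
  fun x b => (∑ k, x k * x k) * (if b = c then 1 else 0) - 2 * (x c * x b)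

lemma contDiff_transF (c : Fin n) : ContDiff ℝ (⊤ : ℕ∞) (transF (n := n) c) := contDiff_const
lemma contDiff_dilF : ContDiff ℝ (⊤ : ℕ∞) (dilF (n := n)) := contDiff_id
lemma contDiff_rotF (i j : Fin n) : ContDiff ℝ (⊤ : ℕ∞) (rotF (n := n) i j) := by
  rw [contDiff_pi]
  intro b
  exact (contDiff_const.mul (contDiff_coord j)).sub (contDiff_const.mul (contDiff_coord i))
lemma contDiff_scF (c : Fin n) : ContDiff ℝ (⊤ : ℕ∞) (scF (n := n) c) := by
  rw [contDiff_pi]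
  intro b
  exact (contDiff_sq.mul contDiff_const).sub
    (contDiff_const.mul ((contDiff_coord c).mul (contDiff_coord b)))

lemma pd_transF (c : Fin n) : pd a (fun y => transF c y b) x = 0 := by
  unfold transF; rw [pd_const]

lemma pd_dilF : pd a (fun y => dilF y b) x = if b = a then 1 else 0 := pd_coord' b

lemma pd_rotF (i j : Fin n) :
    pd a (fun y => rotF i j y b) x =
      (if b = i then 1 else 0) * (if j = a then 1 else 0)
        - (if b = j then 1 else 0) * (if i = a then 1 else 0) := by
  unfold rotF
  rw [pd_sub (by exact (differentiable_const _).mul (diff_coord j) |>.differentiableAt)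
        (by exact (differentiable_const _).mul (diff_coord i) |>.differentiableAt),
    pd_const_mul ((diff_coord j) x), pd_const_mul ((diff_coord i) x),
    pd_coord', pd_coord']

lemma pd_sq : pd a (fun y : Fin n → ℝ => ∑ k, y k * y k) x = 2 * x a := by
  rw [pd_sum Finset.univ (fun k => fun y => y k * y k)
    (fun k _ => ((diff_coord k).mul (diff_coord k)) x)]
  have h : ∀ k : Fin n, pd a (fun y : Fin n → ℝ => y k * y k) x
      = (if k = a then 1 else 0) * x k + x k * (if k = a then 1 else 0) := by
    intro k
    rw [pd_mul (diff_coord k x) (diff_coord k x), pd_coord']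
  rw [Finset.sum_congr rfl (fun k _ => h k)]
  simp only [ite_mul, mul_ite, one_mul, mul_one, zero_mul, mul_zero,
    Finset.sum_add_distrib, Finset.sum_ite_eq', Finset.mem_univ, if_pos]
  ring

lemma pd_scF (c : Fin n) :
    pd a (fun y => scF c y b) x =
      2 * x a * (if b = c then 1 else 0)
        - 2 * ((if c = a then 1 else 0) * x b + x c * (if b = a then 1 else 0)) := by
  unfold scF
  rw [pd_sub (by exact (diff_sq.mul (differentiable_const _)).differentiableAt)
      (by exact ((differentiable_const _).mul ((diff_coord c).mul (diff_coord b))).differentiableAt)]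
  rw [show (fun y : Fin n → ℝ => (∑ k, y k * y k) * (if b = c then 1 else 0))
      = fun y : Fin n → ℝ => (if b = c then (1:ℝ) else 0) * (∑ k, y k * y k) by
        funext y; ring]
  rw [pd_const_mul diff_sq.differentiableAt, pd_sq]
  rw [show (fun y : Fin n → ℝ => 2 * (y c * y b)) = fun y : Fin n → ℝ => (2:ℝ) * (y c * y b) from rfl,
    pd_const_mul (f := fun y => y c * y b) (((diff_coord c).mul (diff_coord b)) x)]
  rw [pd_mul (diff_coord c x) (diff_coord b x), pd_coord', pd_coord']
  ring

end fields

section ckvfields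
variable {n : ℕ} {a b : Fin n} {x : Fin n → ℝ}

lemma divg_transF (c : Fin n) : divg (transF (n := n) c) x = 0 := by
  unfold divg; simp [pd_transF]

lemma divg_dilF : divg (dilF (n := n)) x = n := by
  unfold divg; simp [pd_dilF]

lemma divg_rotF (i j : Fin n) : divg (rotF (n := n) i j) x = 0 := by
  unfold divg
  simp only [pd_rotF]
  simp [Finset.sum_sub_distrib, ite_mul, mul_ite, Finset.sum_ite_eq', Finset.sum_ite_eq, eq_comm]

lemma divg_scF (c : Fin n) : divg (scF (n := n) c) x = -(2 * n) * x c := by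
  have h : ∀ a : Fin n, pd a (fun y => scF c y a) x
      = 2 * x a * (if a = c then 1 else 0) - (2 * ((if c = a then 1 else 0) * x a) + 2 * x c) := by
    intro a
    rw [pd_scF]
    simp only [if_pos rfl, eq_self_iff_true, if_true, mul_one]
    split <;> ring
  rw [show divg (scF c) x = ∑ a, pd a (fun y => scF c y a) x from rfl,
    Finset.sum_congr rfl (fun a _ => h a), Finset.sum_sub_distrib, Finset.sum_add_distrib]
  have h1 : ∑ a : Fin n, 2 * x a * (if a = c then (1:ℝ) else 0) = 2 * x c := by
    simp [mul_ite, Finset.sum_ite_eq']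
  have h2 : ∑ a : Fin n, 2 * ((if c = a then (1:ℝ) else 0) * x a) = 2 * x c := by
    simp [ite_mul, mul_ite, Finset.sum_ite_eq]
  rw [h1, h2, Finset.sum_const, Finset.card_univ, Fintype.card_fin, nsmul_eq_mul]
  ring

lemma ncast_ne (a : Fin n) : (n : ℝ) ≠ 0 := Nat.cast_ne_zero.2 (Fin.pos a).ne'

lemma isCKV_transF (c : Fin n) : IsCKV n (transF c) := by
  refine ⟨contDiff_transF c, fun a b x => ?_⟩
  simp [pd_transF, divg_transF]

lemma isCKV_dilF : IsCKV n dilF := by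
  refine ⟨contDiff_dilF, fun a b x => ?_⟩
  rw [pd_dilF, pd_dilF, divg_dilF]
  have := ncast_ne a
  by_cases hab : a = b
  · subst hab; simp only [if_pos rfl, mul_one]; field_simp; norm_num
  · simp [hab, Ne.symm hab]

lemma isCKV_rotF (i j : Fin n) : IsCKV n (rotF i j) := by
  refine ⟨contDiff_rotF i j, fun a b x => ?_⟩
  rw [pd_rotF, pd_rotF, divg_rotF]
  by_cases h1 : a = i <;> by_cases h2 : a = j <;> by_cases h3 : b = i <;> by_cases h4 : b = j <;>
    simp_all [eq_comm] <;> ring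

lemma isCKV_scF (c : Fin n) : IsCKV n (scF c) := by
  refine ⟨contDiff_scF c, fun a b x => ?_⟩
  rw [pd_scF, pd_scF, divg_scF]
  have hne := ncast_ne a
  by_cases hab : a = b <;> by_cases hac : a = c <;> by_cases hbc : b = c <;>
    simp_all [eq_comm] <;> field_simp <;> ring

end ckvfields

section closure
variable {n : ℕ}

lemma IsCKV.comp (hV : IsCKV n V) (b : Fin n) : ContDiff ℝ (⊤ : ℕ∞) (fun y => V y b) :=
  contDiff_pi.mp hV.1 b

lemma divg_add {U V : (Fin n → ℝ) → Fin n → ℝ} (hU : ContDiff ℝ (⊤ : ℕ∞) U) (hV : ContDiff ℝ (⊤ : ℕ∞) V)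
    (x : Fin n → ℝ) : divg (U + V) x = divg U x + divg V x := by
  unfold divg
  rw [← Finset.sum_add_distrib]
  refine Finset.sum_congr rfl fun a _ => ?_
  exact pd_add (((contDiff_pi.mp hU a).differentiable (by simp)) x)
    (((contDiff_pi.mp hV a).differentiable (by simp)) x)

lemma divg_smul {V : (Fin n → ℝ) → Fin n → ℝ} (hV : ContDiff ℝ (⊤ : ℕ∞) V) (c : ℝ)
    (x : Fin n → ℝ) : divg (c • V) x = c * divg V x := by
  unfold divg
  rw [Finset.mul_sum]
  refine Finset.sum_congr rfl fun a _ => ?_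
  exact pd_const_mul (((contDiff_pi.mp hV a).differentiable (by simp)) x)

lemma IsCKV.add {U V : (Fin n → ℝ) → Fin n → ℝ} (hU : IsCKV n U) (hV : IsCKV n V) :
    IsCKV n (U + V) := by
  refine ⟨hU.1.add hV.1, fun a b x => ?_⟩
  have h1 : ∀ (a b : Fin n), pd a (fun y => (U + V) y b) x
      = pd a (fun y => U y b) x + pd a (fun y => V y b) x := fun a b =>
    pd_add (((hU.comp b).differentiable (by simp)) x) (((hV.comp b).differentiable (by simp)) x)
  rw [h1, h1, divg_add hU.1 hV.1]
  have e1 := hU.2 a b x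
  have e2 := hV.2 a b x
  linarith

lemma IsCKV.smul {V : (Fin n → ℝ) → Fin n → ℝ} (c : ℝ) (hV : IsCKV n V) :
    IsCKV n (c • V) := by
  refine ⟨hV.1.const_smul c, fun a b x => ?_⟩
  have h1 : ∀ (a b : Fin n), pd a (fun y => (c • V) y b) x
      = c * pd a (fun y => V y b) x := fun a b =>
    pd_const_mul (((hV.comp b).differentiable (by simp)) x)
  rw [h1, h1, divg_smul hV.1]
  have e1 := hV.2 a b x
  have : c * (pd a (fun y => V y b) x + pd b (fun y => V y a) x)
      = c * (2 / ↑n * divg V x * if a = b then 1 else 0) := by rw [e1]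
  linarith [this]

lemma isCKV_zero : IsCKV n 0 := by
  refine ⟨contDiff_const, fun a b x => ?_⟩
  have : pd a (fun y => (0 : (Fin n → ℝ) → Fin n → ℝ) y b) x = 0 := by
    simpa using (pd_const (a := a) (c := (0:ℝ)) (n := n)) ▸ congrFun (pd_const (a := a) (c := (0:ℝ))) x
  have hd : divg (0 : (Fin n → ℝ) → Fin n → ℝ) x = 0 := by
    unfold divg
    refine Finset.sum_eq_zero fun a _ => ?_
    simpa using congrFun (pd_const (a := a) (c := (0:ℝ)) (n := n)) x
  rw [this, hd]
  have := congrFun (pd_const (a := b) (c := (0:ℝ)) (n := n)) x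
  simp only [show (fun y : Fin n → ℝ => (0 : (Fin n → ℝ) → Fin n → ℝ) y a) = fun _ => (0:ℝ) from rfl]
  rw [congrFun (pd_const (a := b) (c := (0:ℝ)) (n := n)) x]
  ring

lemma const_of_pd_zero {f : (Fin n → ℝ) → ℝ} (hf : Differentiable ℝ f)
    (h : ∀ (a : Fin n) (x : Fin n → ℝ), pd a f x = 0) (x y : Fin n → ℝ) : f x = f y := by
  apply is_const_of_fderiv_eq_zero hf
  intro z
  ext v
  have hv : v = ∑ a, v a • (Pi.single a (1:ℝ) : Fin n → ℝ) := by
    funext j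
    simp [Pi.single_apply, Finset.sum_apply, Finset.sum_ite_eq]
  rw [hv]
  simp only [map_sum, map_smul]
  rw [Finset.sum_congr rfl fun a _ => by rw [show fderiv ℝ f z (Pi.single a 1) = pd a f z from rfl, h a z]]
  simp

end closure

section core
variable {n : ℕ} {V : (Fin n → ℝ) → Fin n → ℝ}

lemma contDiff_divg (hV : ContDiff ℝ (⊤ : ℕ∞) V) : ContDiff ℝ (⊤ : ℕ∞) (divg V) := by
  unfold divg
  exact ContDiff.sum fun a _ => pd_contDiff (contDiff_pi.mp hV a) a

/-- differentiated CKV equation -/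
lemma ckv_eq2 (hV : IsCKV n V) (a b c : Fin n) (x : Fin n → ℝ) :
    pd c (pd a (fun y => V y b)) x + pd c (pd b (fun y => V y a)) x
      = 2 / n * (if a = b then (1:ℝ) else 0) * pd c (divg V) x := by
  have hab : DifferentiableAt ℝ (pd a (fun y => V y b)) x :=
    ((pd_contDiff (hV.comp b) a).differentiable (by simp)) x
  have hba : DifferentiableAt ℝ (pd b (fun y => V y a)) x :=
    ((pd_contDiff (hV.comp a) b).differentiable (by simp)) x
  rw [← pd_add hab hba]
  have hfun : (fun x => pd a (fun y => V y b) x + pd b (fun y => V y a) x)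
      = fun x => (2 / n * if a = b then (1:ℝ) else 0) * divg V x := by
    funext z
    rw [hV.2 a b z]
    ring
  rw [show (fun y => pd a (fun y => V y b) y + pd b (fun y => V y a) y)
      = fun x => (2 / n * if a = b then (1:ℝ) else 0) * divg V x from hfun]
  rw [pd_const_mul (((contDiff_divg hV.1).differentiable (by simp)) x)]

lemma E_formula (hV : IsCKV n V) (c a b : Fin n) (x : Fin n → ℝ) :
    pd c (pd a (fun y => V y b)) x
      = 1 / n * ((if a = b then (1:ℝ) else 0) * pd c (divg V) x
          + (if b = c then (1:ℝ) else 0) * pd a (divg V) x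
          - (if a = c then (1:ℝ) else 0) * pd b (divg V) x) := by
  have s1 := ckv_eq2 hV a b c x
  have s2 := ckv_eq2 hV b c a x
  have s3 := ckv_eq2 hV c a b x
  -- s1 : E c a b + E c b a = 2/n δab g c
  -- s2 : E a b c + E a c b = 2/n δbc g a
  -- s3 : E b c a + E b a c = 2/n δca g b
  have c1 : pd c (pd b (fun y => V y a)) x = pd b (pd c (fun y => V y a)) x :=
    pd_comm (hV.comp a) c b x
  have c2 : pd a (pd b (fun y => V y c)) x = pd b (pd a (fun y => V y c)) x :=
    pd_comm (hV.comp c) a b x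
  have c3 : pd a (pd c (fun y => V y b)) x = pd c (pd a (fun y => V y b)) x :=
    pd_comm (hV.comp b) a c x
  rw [c1] at s1
  rw [c2, c3] at s2
  have hac : (if a = c then (1:ℝ) else 0) = (if c = a then (1:ℝ) else 0) := by
    rcases eq_or_ne a c with rfl | h
    · rfl
    · rw [if_neg h, if_neg (Ne.symm h)]
  rw [hac]
  linear_combination (s1 + s2 - s3) / 2

lemma exists_third (hn : 3 ≤ n) (a d : Fin n) : ∃ b : Fin n, b ≠ a ∧ b ≠ d := by
  by_contra h
  push_neg at h
  have hsub : (Finset.univ : Finset (Fin n)) ⊆ {a, d} := by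
    intro b _
    rcases eq_or_ne b a with rfl | hb
    · simp
    · simp [h b hb]
  have hc := Finset.card_le_card hsub
  have : ({a, d} : Finset (Fin n)).card ≤ 2 :=
    le_trans (Finset.card_insert_le _ _) (by simp)
  simp only [Finset.card_univ, Fintype.card_fin] at hc
  omega

lemma hess_divg_zero (hV : IsCKV n V) (hn : 3 ≤ n) (d c : Fin n) (x : Fin n → ℝ) :
    pd d (pd c (divg V)) x = 0 := by
  set φ := divg V with hφ
  have hφs : ContDiff ℝ (⊤ : ℕ∞) φ := contDiff_divg hV.1
  have hgs : ∀ a : Fin n, ContDiff ℝ (⊤ : ℕ∞) (pd a φ) := fun a => pd_contDiff hφs a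
  have hsym : ∀ (d c : Fin n) (x), pd d (pd c φ) x = pd c (pd d φ) x := fun d c x =>
    pd_comm hφs d c x
  -- key identity I
  have I : ∀ (a b c d : Fin n) (x : Fin n → ℝ),
      (if b = c then (1:ℝ) else 0) * pd d (pd a φ) x
        - (if a = c then (1:ℝ) else 0) * pd d (pd b φ) x
      = (if b = d then (1:ℝ) else 0) * pd c (pd a φ) x
        - (if a = d then (1:ℝ) else 0) * pd c (pd b φ) x := by
    intro a b c d x
    have hEfun : ∀ (c a b : Fin n), (fun x => pd c (pd a (fun y => V y b)) x)
        = fun x => 1 / n * ((if a = b then (1:ℝ) else 0) * pd c φ x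
            + (if b = c then (1:ℝ) else 0) * pd a φ x
            - (if a = c then (1:ℝ) else 0) * pd b φ x) := by
      intro c a b
      funext z
      exact E_formula hV c a b z
    have hdiff : ∀ (a : Fin n) (z : Fin n → ℝ), DifferentiableAt ℝ (pd a φ) z :=
      fun a z => ((hgs a).differentiable (by simp)) z
    -- differentiate hEfun c a b in direction d, and hEfun d a b in direction c
    have key : ∀ (d c : Fin n), pd d (fun x => pd c (pd a (fun y => V y b)) x) x
        = 1 / n * ((if a = b then (1:ℝ) else 0) * pd d (pd c φ) x
            + (if b = c then (1:ℝ) else 0) * pd d (pd a φ) x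
            - (if a = c then (1:ℝ) else 0) * pd d (pd b φ) x) := by
      intro d c
      rw [hEfun c a b]
      rw [show (fun x => 1 / (n:ℝ) * ((if a = b then (1:ℝ) else 0) * pd c φ x
            + (if b = c then (1:ℝ) else 0) * pd a φ x
            - (if a = c then (1:ℝ) else 0) * pd b φ x))
          = fun x => (1 / (n:ℝ) * (if a = b then (1:ℝ) else 0)) * pd c φ x
            + ((1 / (n:ℝ) * (if b = c then (1:ℝ) else 0)) * pd a φ x
            - (1 / (n:ℝ) * (if a = c then (1:ℝ) else 0)) * pd b φ x) by funext z; ring]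
      rw [pd_add (by exact ((hgs c).differentiable (by simp) |>.const_mul _) x)
          (by exact (((hgs a).differentiable (by simp) |>.const_mul _).sub
            ((hgs b).differentiable (by simp) |>.const_mul _)) x),
        pd_sub (by exact ((hgs a).differentiable (by simp) |>.const_mul _) x)
          (by exact ((hgs b).differentiable (by simp) |>.const_mul _) x),
        pd_const_mul (hdiff c x), pd_const_mul (hdiff a x), pd_const_mul (hdiff b x)]
      ring
    have hFsym : pd d (fun x => pd c (pd a (fun y => V y b)) x) x
        = pd c (fun x => pd d (pd a (fun y => V y b)) x) x := by
      exact pd_comm (pd_contDiff (hV.comp b) a) d c x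
    have k1 := key d c
    have k2 := key c d
    rw [hFsym, k2] at k1
    have hn0 : (n:ℝ) ≠ 0 := ncast_ne a
    have hs := hsym d c x
    set q1 := (if a = b then (1:ℝ) else 0) with hq1
    set q2 := (if b = d then (1:ℝ) else 0) with hq2
    set q3 := (if a = d then (1:ℝ) else 0) with hq3
    set q4 := (if b = c then (1:ℝ) else 0) with hq4
    set q5 := (if a = c then (1:ℝ) else 0) with hq5
    field_simp at k1
    linear_combination (-1 : ℝ) * k1 - q1 * hs
  -- diagonal: for a ≠ b, h a a = - h b b
  have diag : ∀ (a b : Fin n), a ≠ b → pd a (pd a φ) x = - pd b (pd b φ) x := by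
    intro a b hab
    have := I a b b a x
    simp [if_pos rfl, if_neg hab, if_neg (Ne.symm hab), hab] at this
    linarith [this]
  have diag0 : ∀ a : Fin n, pd a (pd a φ) x = 0 := by
    intro a
    obtain ⟨b, hba, -⟩ := exists_third hn a a
    obtain ⟨c, hca, hcb⟩ := exists_third hn a b
    have h1 := diag a b (Ne.symm hba)
    have h2 := diag a c (Ne.symm hca)
    have h3 := diag b c (Ne.symm hcb)
    linarith
  rcases eq_or_ne d c with rfl | hdc
  · exact diag0 d
  · obtain ⟨b, hbc, hbd⟩ := exists_third hn c d
    have key2 := I c b b d x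
    simp only [if_pos rfl, if_neg (Ne.symm hbc), if_neg hbd, if_neg (Ne.symm hdc),
      one_mul, zero_mul, sub_zero, zero_sub, if_true] at key2
    linarith [key2]

end core

section rigidity
variable {n : ℕ} {V : (Fin n → ℝ) → Fin n → ℝ}

lemma rigidity (hV : IsCKV n V) (hn : 3 ≤ n) (h0 : ∀ b, V 0 b = 0)
    (h1 : ∀ a b : Fin n, pd a (fun y => V y b) 0 = 0)
    (h2 : ∀ a : Fin n, pd a (divg V) 0 = 0) : V = 0 := by
  have hg : ∀ (a : Fin n) (x : Fin n → ℝ), pd a (divg V) x = 0 := by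
    intro a x
    have hconst := const_of_pd_zero
      ((pd_contDiff (contDiff_divg hV.1) a).differentiable (by simp))
      (fun c y => hess_divg_zero hV hn c a y) x 0
    rw [hconst, h2 a]
  have hE : ∀ (c a b : Fin n) (x : Fin n → ℝ), pd c (pd a (fun y => V y b)) x = 0 := by
    intro c a b x
    rw [E_formula hV c a b x, hg, hg, hg]
    ring
  have hD : ∀ (a b : Fin n) (x : Fin n → ℝ), pd a (fun y => V y b) x = 0 := by
    intro a b x
    have hconst := const_of_pd_zero
      ((pd_contDiff (hV.comp b) a).differentiable (by simp))
      (fun c y => hE c a b y) x 0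
    rw [hconst, h1 a b]
  funext x b
  have hconst := const_of_pd_zero ((hV.comp b).differentiable (by simp))
    (fun a y => hD a b y) x 0
  show V x b = 0
  rw [hconst, h0 b]

end rigidity

section family
variable {n : ℕ}

abbrev PIdx (n : ℕ) := {p : Fin n × Fin n // p.1 < p.2}
abbrev Idx (n : ℕ) := (Fin n ⊕ Fin n) ⊕ (Unit ⊕ PIdx n)

def bF : Idx n → (Fin n → ℝ) → Fin n → ℝ
  | .inl (.inl c) => transF c
  | .inl (.inr c) => scF c
  | .inr (.inl _) => dilF
  | .inr (.inr p) => rotF p.1.1 p.1.2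

lemma isCKV_bF (i : Idx n) : IsCKV n (bF i) := by
  rcases i with (c | c) | (u | p)
  · exact isCKV_transF c
  · exact isCKV_scF c
  · exact isCKV_dilF
  · exact isCKV_rotF p.1.1 p.1.2

lemma contDiff_bF (i : Idx n) : ContDiff ℝ (⊤ : ℕ∞) (bF i) := (isCKV_bF i).1

noncomputable def combo (t : Idx n → ℝ) : (Fin n → ℝ) → Fin n → ℝ := ∑ i, t i • bF i

lemma combo_apply (t : Idx n → ℝ) (x : Fin n → ℝ) (b : Fin n) :
    combo t x b = ∑ i, t i * bF i x b := by
  unfold combo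
  rw [Finset.sum_apply, Finset.sum_apply]
  rfl

lemma contDiff_combo (t : Idx n → ℝ) : ContDiff ℝ (⊤ : ℕ∞) (combo t) := by
  have : combo t = fun x => ∑ i, t i • bF i x := by
    funext x
    unfold combo
    rw [Finset.sum_apply]
    rfl
  rw [this]
  exact ContDiff.sum fun i _ => (contDiff_bF i).const_smul (t i)

lemma pd_combo (t : Idx n → ℝ) (a b : Fin n) (x : Fin n → ℝ) :
    pd a (fun y => combo t y b) x = ∑ i, t i * pd a (fun y => bF i y b) x := by
  have h1 : (fun y => combo t y b) = fun y => ∑ i, t i * bF i y b := by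
    funext y; exact combo_apply t y b
  rw [h1, pd_sum Finset.univ (fun i => fun y => t i * bF i y b)
    (fun i _ => (((((isCKV_bF i).comp b).differentiable (by simp)).const_mul (t i))) x)]
  refine Finset.sum_congr rfl fun i _ => ?_
  exact pd_const_mul ((((isCKV_bF i).comp b).differentiable (by simp)) x)

lemma divg_combo (t : Idx n → ℝ) (x : Fin n → ℝ) :
    divg (combo t) x = t (.inr (.inl ())) * n
      + ∑ c, t (.inl (.inr c)) * (-(2 * n) * x c) := by
  have h1 : divg (combo t) x = ∑ i, t i * divg (bF i) x := by
    unfold divg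
    rw [show ∑ a, pd a (fun y => combo t y a) x = ∑ a, ∑ i, t i * pd a (fun y => bF i y a) x from
      Finset.sum_congr rfl fun a _ => pd_combo t a a x, Finset.sum_comm]
    exact Finset.sum_congr rfl fun i _ => by rw [Finset.mul_sum]
  rw [h1]
  simp only [Fintype.sum_sum_type]
  have ht : ∀ c : Fin n, t (.inl (.inl c)) * divg (bF (.inl (.inl c))) x = 0 := fun c => by
    show t _ * divg (transF c) x = 0
    rw [divg_transF]; ring
  have hr : ∀ p : PIdx n, t (.inr (.inr p)) * divg (bF (.inr (.inr p))) x = 0 := fun p => by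
    show t _ * divg (rotF p.1.1 p.1.2) x = 0
    rw [divg_rotF]; ring
  have hs : ∀ c : Fin n, t (.inl (.inr c)) * divg (bF (.inl (.inr c))) x
      = t (.inl (.inr c)) * (-(2 * n) * x c) := fun c => by
    show t _ * divg (scF c) x = _
    rw [divg_scF]
  have hd : ∑ u : Unit, t (.inr (.inl u)) * divg (bF (.inr (.inl u))) x
      = t (.inr (.inl ())) * n := by
    have : ∀ u : Unit, t (.inr (.inl u)) * divg (bF (.inr (.inl u))) x
        = t (.inr (.inl ())) * n := fun u => by
      show t _ * divg dilF x = _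
      rw [divg_dilF]
    simp [this]
  rw [Finset.sum_congr rfl fun c _ => ht c, Finset.sum_congr rfl fun p _ => hr p,
    Finset.sum_congr rfl fun c _ => hs c, hd]
  simp only [Finset.sum_const_zero, zero_add, add_zero]
  rw [add_comm]

end family

section eval
variable {n : ℕ}

lemma pd_divg_combo (t : Idx n → ℝ) (a : Fin n) (x : Fin n → ℝ) :
    pd a (divg (combo t)) x = -(2 * n) * t (.inl (.inr a)) := by
  have h1 : divg (combo t) = fun x => t (.inr (.inl ())) * n
      + ∑ c, (t (.inl (.inr c)) * -(2 * n)) * x c := by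
    funext x
    rw [divg_combo]
    congr 1
    exact Finset.sum_congr rfl fun c _ => by ring
  rw [h1]
  have hdiff1 : DifferentiableAt ℝ (fun _ : Fin n → ℝ => t (.inr (.inl ())) * (n:ℝ)) x :=
    differentiableAt_const _
  have hdiff2 : DifferentiableAt ℝ
      (fun y : Fin n → ℝ => ∑ c, (t (.inl (.inr c)) * -(2 * n)) * y c) x := by
    exact (Differentiable.fun_sum fun c _ => (diff_coord c).const_mul _) x
  rw [pd_add hdiff1 hdiff2]
  rw [show pd a (fun _ : Fin n → ℝ => t (.inr (.inl ())) * (n:ℝ)) x = 0 from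
    congrFun pd_const x]
  rw [pd_sum Finset.univ _ (fun c _ => ((diff_coord c).const_mul _) x)]
  have : ∀ c : Fin n, pd a (fun y : Fin n → ℝ => (t (.inl (.inr c)) * -(2 * n)) * y c) x
      = (t (.inl (.inr c)) * -(2 * n)) * (if c = a then 1 else 0) := fun c => by
    rw [pd_const_mul (diff_coord c x), pd_coord']
  rw [Finset.sum_congr rfl fun c _ => this c]
  simp [mul_ite, Finset.sum_ite_eq]
  ring

lemma combo_zero (t : Idx n → ℝ) (b : Fin n) :
    combo t 0 b = t (.inl (.inl b)) := by
  rw [combo_apply]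
  simp only [Fintype.sum_sum_type]
  have h1 : ∀ c : Fin n, t (.inl (.inl c)) * bF (.inl (.inl c)) 0 b
      = t (.inl (.inl c)) * (if b = c then (1:ℝ) else 0) := fun c => rfl
  have h2 : ∀ c : Fin n, t (.inl (.inr c)) * bF (.inl (.inr c)) 0 b = 0 := fun c => by
    show t _ * scF c 0 b = 0
    unfold scF
    simp
  have h3 : ∀ u : Unit, t (.inr (.inl u)) * bF (.inr (.inl u)) 0 b = 0 := fun u => by
    show t _ * dilF 0 b = 0
    unfold dilF
    simp
  have h4 : ∀ p : PIdx n, t (.inr (.inr p)) * bF (.inr (.inr p)) 0 b = 0 := fun p => by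
    show t _ * rotF p.1.1 p.1.2 0 b = 0
    unfold rotF
    simp
  rw [Finset.sum_congr rfl fun c _ => h1 c, Finset.sum_congr rfl fun c _ => h2 c,
    Finset.sum_congr rfl fun u _ => h3 u, Finset.sum_congr rfl fun p _ => h4 p]
  simp [mul_ite, Finset.sum_ite_eq']

lemma pd_combo_zero (t : Idx n → ℝ) (a b : Fin n) :
    pd a (fun y => combo t y b) 0 = t (.inr (.inl ())) * (if b = a then 1 else 0)
      + ∑ p : PIdx n, t (.inr (.inr p)) *
          ((if b = p.1.1 then (1:ℝ) else 0) * (if p.1.2 = a then 1 else 0)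
            - (if b = p.1.2 then (1:ℝ) else 0) * (if p.1.1 = a then 1 else 0)) := by
  rw [pd_combo]
  simp only [Fintype.sum_sum_type]
  have h1 : ∀ c : Fin n, t (.inl (.inl c)) * pd a (fun y => bF (.inl (.inl c)) y b) 0 = 0 :=
    fun c => by rw [show pd a (fun y => bF (.inl (.inl c)) y b) 0 = 0 from pd_transF c]; ring
  have h2 : ∀ c : Fin n, t (.inl (.inr c)) * pd a (fun y => bF (.inl (.inr c)) y b) 0 = 0 :=
    fun c => by
      rw [show pd a (fun y => bF (.inl (.inr c)) y b) 0
        = 2 * (0:Fin n → ℝ) a * (if b = c then 1 else 0)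
          - 2 * ((if c = a then 1 else 0) * (0:Fin n → ℝ) b
            + (0:Fin n → ℝ) c * (if b = a then 1 else 0)) from pd_scF c]
      simp
  have h3 : ∀ u : Unit, t (.inr (.inl u)) * pd a (fun y => bF (.inr (.inl u)) y b) 0
      = t (.inr (.inl ())) * (if b = a then 1 else 0) := fun u => by
    rw [show pd a (fun y => bF (.inr (.inl u)) y b) 0 = (if b = a then (1:ℝ) else 0) from pd_dilF]
  have h4 : ∀ p : PIdx n, t (.inr (.inr p)) * pd a (fun y => bF (.inr (.inr p)) y b) 0
      = t (.inr (.inr p)) *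
          ((if b = p.1.1 then (1:ℝ) else 0) * (if p.1.2 = a then 1 else 0)
            - (if b = p.1.2 then (1:ℝ) else 0) * (if p.1.1 = a then 1 else 0)) := fun p => by
    rw [show pd a (fun y => bF (.inr (.inr p)) y b) 0
      = (if b = p.1.1 then (1:ℝ) else 0) * (if p.1.2 = a then 1 else 0)
          - (if b = p.1.2 then (1:ℝ) else 0) * (if p.1.1 = a then 1 else 0) from pd_rotF _ _]
  rw [Finset.sum_congr rfl fun c _ => h1 c, Finset.sum_congr rfl fun c _ => h2 c,
    Finset.sum_congr rfl fun u _ => h3 u, Finset.sum_congr rfl fun p _ => h4 p]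
  simp

lemma rotsum_eval (t : PIdx n → ℝ) (a b : Fin n) :
    ∑ q : PIdx n, t q * ((if b = q.1.1 then (1:ℝ) else 0) * (if q.1.2 = a then 1 else 0)
      - (if b = q.1.2 then (1:ℝ) else 0) * (if q.1.1 = a then 1 else 0))
    = if h : b < a then t ⟨(b, a), h⟩ else if h' : a < b then -t ⟨(a, b), h'⟩ else 0 := by
  rcases lt_trichotomy b a with h | h | h
  · rw [dif_pos h]
    rw [Finset.sum_eq_single (⟨(b, a), h⟩ : PIdx n)]
    · simp [h.ne]
    · rintro ⟨⟨i, j⟩, hij⟩ - hne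
      have hterm1 : (if b = i then (1:ℝ) else 0) * (if j = a then 1 else 0) = 0 := by
        by_cases hbi : b = i
        · by_cases hja : j = a
          · exact absurd (Subtype.ext (Prod.ext hbi.symm hja)) hne
          · simp [hja]
        · simp [hbi]
      have hterm2 : (if b = j then (1:ℝ) else 0) * (if i = a then 1 else 0) = 0 := by
        by_cases hbj : b = j
        · by_cases hia : i = a
          · exfalso
            rw [← hbj, hia] at hij
            exact absurd h (not_lt.mpr hij.le)
          · simp [hia]
        · simp [hbj]
      show t _ * _ = 0
      rw [hterm1, hterm2]
      ring
    · simp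
  · rw [dif_neg (by simp [h]), dif_neg (by simp [h])]
    refine Finset.sum_eq_zero fun q _ => ?_
    obtain ⟨⟨i, j⟩, hij⟩ := q
    have hterm1 : (if b = i then (1:ℝ) else 0) * (if j = a then 1 else 0) = 0 := by
      by_cases hbi : b = i
      · by_cases hja : j = a
        · exfalso
          have e : i = j := hbi.symm.trans (h.trans hja.symm)
          rw [e] at hij
          exact lt_irrefl _ hij
        · simp [hja]
      · simp [hbi]
    have hterm2 : (if b = j then (1:ℝ) else 0) * (if i = a then 1 else 0) = 0 := by
      by_cases hbj : b = j
      · by_cases hia : i = a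
        · exfalso
          have e : i = j := (hia.trans h.symm).trans hbj
          rw [e] at hij
          exact lt_irrefl _ hij
        · simp [hia]
      · simp [hbj]
    show t _ * _ = 0
    rw [hterm1, hterm2]
    ring
  · rw [dif_neg (not_lt.mpr h.le), dif_pos h]
    rw [Finset.sum_eq_single (⟨(a, b), h⟩ : PIdx n)]
    · simp [h.ne, h.ne']
    · rintro ⟨⟨i, j⟩, hij⟩ - hne
      have hterm1 : (if b = i then (1:ℝ) else 0) * (if j = a then 1 else 0) = 0 := by
        by_cases hbi : b = i
        · by_cases hja : j = a
          · exfalso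
            rw [← hbi] at hij
            rw [hja] at hij
            exact absurd h (not_lt.mpr hij.le)
          · simp [hja]
        · simp [hbi]
      have hterm2 : (if b = j then (1:ℝ) else 0) * (if i = a then 1 else 0) = 0 := by
        by_cases hbj : b = j
        · by_cases hia : i = a
          · exact absurd (Subtype.ext (Prod.ext hia hbj.symm)) hne
          · simp [hia]
        · simp [hbj]
      show t _ * _ = 0
      rw [hterm1, hterm2]
      ring
    · simp

end eval

section final
variable {n : ℕ}

lemma divg_zero_fn : divg (0 : (Fin n → ℝ) → Fin n → ℝ) = fun _ => 0 := by
  funext x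
  unfold divg
  refine Finset.sum_eq_zero fun a _ => ?_
  exact congrFun (pd_const (a := a) (c := (0:ℝ))) x

lemma isCKV_combo (t : Idx n → ℝ) : IsCKV n (combo t) := by
  unfold combo
  refine Finset.sum_induction _ (IsCKV n) (fun a b ha hb => ha.add hb) isCKV_zero
    fun i _ => IsCKV.smul (t i) (isCKV_bF i)

lemma linIndep_bF (hn : 3 ≤ n) : LinearIndependent ℝ (bF (n := n)) := by
  rw [Fintype.linearIndependent_iff]
  intro t hsum i
  have hc : combo t = 0 := hsum
  have hzero_pd : ∀ (a b : Fin n), pd a (fun y => combo t y b) 0 = 0 := by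
    intro a b
    rw [hc]
    exact congrFun (pd_const (a := a) (c := (0:ℝ))) 0
  have hdil : t (.inr (.inl ())) = 0 := by
    have a0 : Fin n := ⟨0, by omega⟩
    have h := hzero_pd a0 a0
    rw [pd_combo_zero, rotsum_eval (fun q => t (.inr (.inr q))) a0 a0] at h
    simpa using h
  have hrot : ∀ p : PIdx n, t (.inr (.inr p)) = 0 := by
    intro p
    have h := hzero_pd p.1.2 p.1.1
    rw [pd_combo_zero, rotsum_eval (fun q => t (.inr (.inr q))) p.1.2 p.1.1] at h
    rw [dif_pos p.2] at h
    have hne : ¬ (p.1.1 = p.1.2) := p.2.ne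
    rw [if_neg hne] at h
    have heta : (⟨(p.1.1, p.1.2), p.2⟩ : PIdx n) = p := Subtype.ext rfl
    rw [heta] at h
    simpa using h
  have hsc : ∀ c : Fin n, t (.inl (.inr c)) = 0 := by
    intro c
    have h := pd_divg_combo t c 0
    rw [hc, divg_zero_fn] at h
    rw [congrFun (pd_const (a := c) (c := (0:ℝ))) 0] at h
    have hn0 : (n:ℝ) ≠ 0 := ncast_ne c
    have h2 : (-(2 * (n:ℝ))) * t (.inl (.inr c)) = 0 := by linarith [h]
    rcases mul_eq_zero.mp h2 with h' | h'
    · exfalso; apply hn0; linarith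
    · exact h'
  have htrans : ∀ b : Fin n, t (.inl (.inl b)) = 0 := by
    intro b
    rw [← combo_zero t b, hc]
    rfl
  rcases i with (c | c) | (u | p)
  · exact htrans c
  · exact hsc c
  · cases u; exact hdil
  · exact hrot p

lemma ckv_mem_span (hn : 3 ≤ n) {V : (Fin n → ℝ) → Fin n → ℝ} (hV : IsCKV n V) :
    V ∈ Submodule.span ℝ (Set.range (bF (n := n))) := by
  classical
  set t : Idx n → ℝ := fun i => match i with
    | .inl (.inl c) => V 0 c
    | .inl (.inr c) => -(pd c (divg V) 0) / (2 * n)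
    | .inr (.inl _) => divg V 0 / n
    | .inr (.inr p) => pd p.1.2 (fun y => V y p.1.1) 0
    with ht
  have hck : IsCKV n (combo t) := isCKV_combo t
  set U : (Fin n → ℝ) → Fin n → ℝ := V + (-1 : ℝ) • combo t with hUdef
  have hU : IsCKV n U := hV.add (IsCKV.smul (-1) hck)
  have hn0 : (n:ℝ) ≠ 0 := by
    have : (0:ℕ) < n := by omega
    exact_mod_cast this.ne'
  -- component formula for U
  have hUcomp : ∀ (y : Fin n → ℝ) (b : Fin n), U y b = V y b + (-1) * combo t y b := by
    intro y b
    rfl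
  -- (a) value at 0
  have h0 : ∀ b, U 0 b = 0 := by
    intro b
    rw [hUcomp, combo_zero]
    show V 0 b + (-1) * V 0 b = 0
    ring
  -- (b) first derivatives at 0
  have h1 : ∀ a b : Fin n, pd a (fun y => U y b) 0 = 0 := by
    intro a b
    have hfn : (fun y => U y b) = fun y => V y b + (-1 : ℝ) * combo t y b := by
      funext y; exact hUcomp y b
    rw [hfn, pd_add (((hV.comp b).differentiable (by simp)) 0)
        (((((isCKV_combo t).comp b).differentiable (by simp)).const_mul (-1)) 0),
      pd_const_mul ((((isCKV_combo t).comp b).differentiable (by simp)) 0)]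
    rw [pd_combo_zero, rotsum_eval (fun q => t (.inr (.inr q))) a b]
    rcases lt_trichotomy b a with h | h | h
    · rw [dif_pos h, if_neg h.ne]
      show pd a (fun y => V y b) 0 + -1 * (t (.inr (.inl ())) * 0 + pd a (fun y => V y b) 0) = 0
      ring
    · subst h
      rw [dif_neg (lt_irrefl _), dif_neg (lt_irrefl _), if_pos rfl]
      have hSym := hV.2 b b 0
      rw [if_pos rfl] at hSym
      have hSym' : pd b (fun y => V y b) 0 * n = divg V 0 := by
        field_simp at hSym
        linarith [hSym]
      show pd b (fun y => V y b) 0 + -1 * (divg V 0 / ↑n * 1 + 0) = 0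
      field_simp
      linarith [hSym']
    · rw [dif_neg (not_lt.mpr h.le), dif_pos h, if_neg h.ne']
      have hSym := hV.2 a b 0
      rw [if_neg h.ne] at hSym
      show pd a (fun y => V y b) 0 + -1 * (t (.inr (.inl ())) * 0 + -(pd b (fun y => V y a) 0)) = 0
      linarith [hSym]
  -- (c) derivative of divergence at 0
  have h2 : ∀ a : Fin n, pd a (divg U) 0 = 0 := by
    intro a
    have hsm : ContDiff ℝ (⊤ : ℕ∞) ((-1 : ℝ) • combo t) := by
      exact (contDiff_combo t).const_smul (-1 : ℝ)
    have hfn : divg U = fun x => divg V x + (-1 : ℝ) * divg (combo t) x := by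
      funext x
      rw [hUdef, divg_add hV.1 hsm, divg_smul (contDiff_combo t)]
    rw [hfn, pd_add (((contDiff_divg hV.1).differentiable (by simp)) 0)
        ((((contDiff_divg (contDiff_combo t)).differentiable (by simp)).const_mul (-1)) 0),
      pd_const_mul (((contDiff_divg (contDiff_combo t)).differentiable (by simp)) 0),
      pd_divg_combo]
    show pd a (divg V) 0 + -1 * (-(2 * n) * (-(pd a (divg V) 0) / (2 * n))) = 0
    field_simp
    ring
  have hU0 : U = 0 := rigidity hU hn h0 h1 h2
  have hVeq : V = combo t := by
    have hVU : V - combo t = U := by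
      rw [hUdef, sub_eq_add_neg]
      congr 1
      exact (neg_one_smul ℝ (combo t)).symm
    rw [← sub_eq_zero, hVU, hU0]
  rw [hVeq]
  unfold combo
  exact Submodule.sum_mem _ fun i _ =>
    Submodule.smul_mem _ _ (Submodule.subset_span ⟨i, rfl⟩)

end final

def pidxEquiv (n : ℕ) : PIdx n ≃ Σ j : Fin n, Fin j.val where
  toFun p := ⟨p.1.2, ⟨p.1.1.val, p.2⟩⟩
  invFun s := ⟨(⟨s.2.val, s.2.isLt.trans s.1.isLt⟩, s.1), s.2.isLt⟩
  left_inv p := Subtype.ext rfl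
  right_inv s := rfl

/-- For n ≥ 3, the conformal Killing vectors on ℝⁿ form a real vector subspace of the
space of (smooth) vector fields, of dimension `(n+1)(n+2)/2`. -/
theorem stmt_7 (n : ℕ) (hn : 3 ≤ n) :
    ∃ W : Submodule ℝ ((Fin n → ℝ) → (Fin n → ℝ)),
      (∀ V, V ∈ W ↔ IsCKV n V) ∧ Module.finrank ℝ W = (n + 1) * (n + 2) / 2 := by

  classical
  let W : Submodule ℝ ((Fin n → ℝ) → (Fin n → ℝ)) :=
    { carrier := {V | IsCKV n V}
      add_mem' := fun ha hb => ha.add hb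
      zero_mem' := isCKV_zero
      smul_mem' := fun c V h => h.smul c }
  refine ⟨W, fun V => Iff.rfl, ?_⟩
  have hW : W = Submodule.span ℝ (Set.range (bF (n := n))) := by
    apply le_antisymm
    · intro V hV
      exact ckv_mem_span hn hV
    · rw [Submodule.span_le]
      rintro f ⟨i, rfl⟩
      exact isCKV_bF i
  rw [hW, finrank_span_eq_card (linIndep_bF hn)]
  have hcard : Fintype.card (PIdx n) * 2 = n * (n - 1) := by
    have h1 : Fintype.card (PIdx n) = ∑ j : Fin n, (j : ℕ) := by
      rw [Fintype.card_congr (pidxEquiv n)]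
      simp
    rw [h1, Fin.sum_univ_eq_sum_range (fun i => i) n]
    exact Finset.sum_range_id_mul_two n
  simp only [Fintype.card_sum, Fintype.card_fin, Fintype.card_unit]
  obtain ⟨q, rfl⟩ : ∃ q, n = q + 1 := ⟨n - 1, by omega⟩
  have hc2 : Fintype.card (PIdx (q + 1)) * 2 = (q + 1) * q := by simpa using hcard
  have hx : ((q + 1) + 1) * ((q + 1) + 2) = (q + 1) * q + 4 * q + 6 := by ring
  rw [hx, ← hc2]
  omega
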